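/- arXiv:1904.06662 — 4 statements merged into one kernel-verified Lean document; each statement's English description precedes it below -/
import Mathlib

section
/- For any bipartite multigraph G, the chromatic index of G equals the list chromatic index of G, i.e. χ'(G) = χ'_l(G). -/
open scoped Classical

/-- A multigraph on vertex type `V` with edge type `E`: each edge has a pair of
distinct endpoints (no loops); multiple edges with the same endpoints are allowed. -/
structure Multigraph (V : Type*) (E : Type*) where
  ends : E → Sym2 V
  not_isDiag : ∀ e, ¬ (ends e).IsDiag

namespace Multigraph

variable {V E : Type*}

/-- The line graph of a multigraph: vertices are the edges of `G`,
two of them adjacent iff the corresponding edges share an endpoint. -/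
def lineGraph (G : Multigraph V E) : SimpleGraph E where
  Adj e q := e ≠ q ∧ ∃ x, x ∈ G.ends e ∧ x ∈ G.ends q
  symm := ⟨by
    rintro e q ⟨hne, x, he, hq⟩
    exact ⟨hne.symm, x, hq, he⟩⟩
  loopless := ⟨fun e h => h.1 rfl⟩

/-- The degree of a vertex: the number of incident edges. -/
noncomputable def degree (G : Multigraph V E) (x : V) : ℕ :=
  {e : E | x ∈ G.ends e}.ncard

end Multigraph

/-- A simple graph `H` is `f`-choosable if from any assignment of color lists
of sizes prescribed by `f` one can choose a proper coloring. -/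
def Choosable {α : Type*} (H : SimpleGraph α) (f : α → ℕ) : Prop :=
  ∀ A : α → Finset ℕ, (∀ x, (A x).card = f x) →
    ∃ c : α → ℕ, (∀ x, c x ∈ A x) ∧ ∀ ⦃x y⦄, H.Adj x y → c x ≠ c y

/-- The chromatic number of a simple graph, as a natural number. -/
noncomputable def chromNum {α : Type*} (H : SimpleGraph α) : ℕ :=
  sInf {n | H.Colorable n}

/-- The choice number (list chromatic number) of a simple graph. -/
noncomputable def listChromNum {α : Type*} (H : SimpleGraph α) : ℕ :=
  sInf {n | Choosable H fun _ => n}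

/-- The clique number: the size of a maximum clique. -/
noncomputable def cliqNum {α : Type*} (H : SimpleGraph α) : ℕ :=
  sSup {n | ∃ s : Finset α, H.IsNClique n s}

/-- A graph is perfect if every induced subgraph has chromatic number
equal to its clique number. -/
def IsPerfect {α : Type*} (H : SimpleGraph α) : Prop :=
  ∀ s : Set α, chromNum (H.induce s) = cliqNum (H.induce s)

/-!
Fix a proper edge colouring `c` with `m` colours of a bipartite multigraph with sides `X`, `Y`,
and orient its line graph: two edges sharing an `X`-end point towards the smaller colour, two
edges sharing a `Y`-end towards the larger one. The out-neighbours of an edge `e` carry distinct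
colours different from `c e`, so every out-degree is below `m`. A kernel of this orientation
restricted to a set of edges is a stable matching, which exists by the Gale–Shapley algorithm:
every `X`-vertex proposes its edge of smallest colour, every `Y`-vertex keeps the proposal of
largest colour, the other proposals are deleted, and one recurses.
Finally, a digraph in which every vertex set has a kernel is choosable from lists longer than the
out-degrees: pick a colour `a`, give it to a kernel of the vertices whose lists contain `a`,
delete `a` from the other lists and recurse; every remaining vertex either loses an out-neighbour
into the kernel or keeps its whole list.
-/

open Finset

section Kernel

variable {α : Type*}

def IsKernel (H : SimpleGraph α) (D : α → α → Prop) (S K : Finset α) : Prop :=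
  K ⊆ S ∧ H.IsIndepSet (K : Set α) ∧ ∀ e ∈ S, e ∉ K → ∃ k ∈ K, D e k

variable {H : SimpleGraph α} {D : α → α → Prop}

theorem IsKernel.nonempty {S K : Finset α} (hK : IsKernel H D S K) (hS : S.Nonempty) :
    K.Nonempty := by
  obtain ⟨e, he⟩ := hS
  by_cases heK : e ∈ K
  · exact ⟨e, heK⟩
  · obtain ⟨k, hk, -⟩ := hK.2.2 e he heK
    exact ⟨k, hk⟩

theorem IsKernel.card_filter_sdiff_lt_card_erase {T K : Finset α} {A : α → Finset ℕ} {a : ℕ}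
    (hK : IsKernel H D {e ∈ T | a ∈ A e} K) (hA : ∀ e ∈ T, #{q ∈ T | D e q} < #(A e)) :
    ∀ e ∈ T \ K, #{q ∈ T \ K | D e q} < #((A e).erase a) := by
  intro e he
  obtain ⟨heT, heK⟩ := mem_sdiff.1 he
  have hsub : {q ∈ T \ K | D e q} ⊆ {q ∈ T | D e q} := filter_subset_filter _ sdiff_subset
  by_cases hae : a ∈ A e
  · obtain ⟨k, hk, hek⟩ := hK.2.2 e (mem_filter.2 ⟨heT, hae⟩) heK
    have hk' : k ∉ {q ∈ T \ K | D e q} := fun h => (mem_sdiff.1 (mem_filter.1 h).1).2 hk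
    have hlt : #{q ∈ T \ K | D e q} < #{q ∈ T | D e q} :=
      card_lt_card ⟨hsub, fun h => hk' (h (mem_filter.2 ⟨(mem_filter.1 (hK.1 hk)).1, hek⟩))⟩
    have := hA e heT
    rw [card_erase_of_mem hae]
    omega
  · rw [erase_eq_of_notMem hae]
    exact (card_le_card hsub).trans_lt (hA e heT)

theorem exists_listColoring_of_forall_isKernel (hker : ∀ S, ∃ K, IsKernel H D S K)
    (T : Finset α) (A : α → Finset ℕ) (hA : ∀ e ∈ T, #{q ∈ T | D e q} < #(A e)) :
    ∃ ch : α → ℕ, (∀ e ∈ T, ch e ∈ A e) ∧ ∀ e ∈ T, ∀ q ∈ T, H.Adj e q → ch e ≠ ch q := by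
  induction T using Finset.strongInduction generalizing A with
  | H T ih =>
  obtain rfl | ⟨e₀, he₀⟩ := T.eq_empty_or_nonempty
  · simp
  obtain ⟨a, ha⟩ := card_pos.mp ((Nat.zero_le _).trans_lt (hA e₀ he₀))
  obtain ⟨K, hK⟩ := hker {e ∈ T | a ∈ A e}
  have hKT : K ⊆ T := hK.1.trans (filter_subset _ _)
  have hKne : K.Nonempty := hK.nonempty ⟨e₀, mem_filter.2 ⟨he₀, ha⟩⟩
  obtain ⟨ch, hchA, hch⟩ :=
    ih (T \ K) (sdiff_ssubset hKT hKne) _ (hK.card_filter_sdiff_lt_card_erase hA)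
  have hch_ne : ∀ x ∈ T, x ∉ K → ch x ≠ a := fun x hx hxK =>
    ne_of_mem_erase (hchA x (mem_sdiff.2 ⟨hx, hxK⟩))
  refine ⟨fun e => if e ∈ K then a else ch e, fun e he => ?_, fun e he q hq hadj => ?_⟩
  · dsimp only
    split_ifs with heK
    · exact (mem_filter.1 (hK.1 heK)).2
    · exact mem_of_mem_erase (hchA e (mem_sdiff.2 ⟨he, heK⟩))
  · dsimp only
    split_ifs with heK hqK hqK
    · exact (hK.2.1 heK hqK hadj.ne hadj).elim
    · exact (hch_ne q hq hqK).symm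
    · exact hch_ne e he heK
    · exact hch e (mem_sdiff.2 ⟨he, heK⟩) q (mem_sdiff.2 ⟨hq, hqK⟩) hadj

theorem choosable_of_forall_isKernel [Fintype α] {f : α → ℕ}
    (hker : ∀ S, ∃ K, IsKernel H D S K) (hf : ∀ e, #{q | D e q} < f e) : Choosable H f := by
  intro A hA
  obtain ⟨ch, hchA, hch⟩ :=
    exists_listColoring_of_forall_isKernel hker univ A fun e _ => hA e ▸ hf e
  exact ⟨ch, fun e => hchA e (mem_univ e), fun e q => hch e (mem_univ e) q (mem_univ q)⟩

end Kernel

section ChromNum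

variable {α : Type*} (H : SimpleGraph α)

theorem colorable_of_choosable {n : ℕ} (h : Choosable H fun _ => n) : H.Colorable n := by
  obtain ⟨ch, hch, hproper⟩ := h (fun _ => range n) fun _ => card_range n
  exact ⟨⟨fun e => ⟨ch e, mem_range.1 (hch e)⟩, fun hadj h => hproper hadj (congrArg Fin.val h)⟩⟩

theorem colorable_chromNum [Fintype α] : H.Colorable (chromNum H) :=
  Nat.sInf_mem (s := {n | H.Colorable n}) ⟨_, H.colorable_of_fintype⟩

theorem chromNum_eq_listChromNum_of_choosable (h : Choosable H fun _ => chromNum H) :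
    chromNum H = listChromNum H :=
  le_antisymm (Nat.sInf_le (colorable_of_choosable H
    (Nat.sInf_mem (s := {n | Choosable H fun _ => n}) ⟨_, h⟩))) (Nat.sInf_le h)

end ChromNum

def bipartiteLineGraph {E V W : Type*} (xe : E → V) (ye : E → W) : SimpleGraph E where
  Adj e q := e ≠ q ∧ (xe e = xe q ∨ ye e = ye q)
  symm := ⟨fun _ _ ⟨hne, h⟩ => ⟨hne.symm, h.imp Eq.symm Eq.symm⟩⟩
  loopless := ⟨fun _ h => h.1 rfl⟩

namespace Galvin

variable {E V W ι : Type*} [LinearOrder ι] (xe : E → V) (ye : E → W) (c : E → ι)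

def Arc (e q : E) : Prop :=
  (xe q = xe e ∧ c q < c e) ∨ (ye q = ye e ∧ c e < c q)

noncomputable def proposals (S : Finset E) : Finset E :=
  {e ∈ S | ∀ q ∈ S, xe q = xe e → c e ≤ c q}

noncomputable def accepted (S : Finset E) : Finset E :=
  {e ∈ proposals xe c S | ∀ q ∈ proposals xe c S, ye q = ye e → c q ≤ c e}

variable {xe ye c}

theorem accepted_subset_proposals (S : Finset E) : accepted xe ye c S ⊆ proposals xe c S :=
  filter_subset _ _

theorem proposals_subset (S : Finset E) : proposals xe c S ⊆ S :=
  filter_subset _ _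

theorem exists_mem_proposals_le {S : Finset E} {e : E} (he : e ∈ S) :
    ∃ u ∈ proposals xe c S, xe u = xe e ∧ c u ≤ c e := by
  obtain ⟨u, hu, hmin⟩ := exists_min_image {q ∈ S | xe q = xe e} c ⟨e, mem_filter.2 ⟨he, rfl⟩⟩
  obtain ⟨huS, hux⟩ := mem_filter.1 hu
  refine ⟨u, mem_filter.2 ⟨huS, fun q hq hqx => ?_⟩, hux, hmin e (mem_filter.2 ⟨he, rfl⟩)⟩
  exact hmin q (mem_filter.2 ⟨hq, hqx.trans hux⟩)

theorem exists_mem_accepted_le {S : Finset E} {g : E} (hg : g ∈ proposals xe c S) :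
    ∃ m ∈ accepted xe ye c S, ye m = ye g ∧ c g ≤ c m := by
  obtain ⟨m, hm, hmax⟩ :=
    exists_max_image {q ∈ proposals xe c S | ye q = ye g} c ⟨g, mem_filter.2 ⟨hg, rfl⟩⟩
  obtain ⟨hmP, hmy⟩ := mem_filter.1 hm
  refine ⟨m, mem_filter.2 ⟨hmP, fun q hq hqy => ?_⟩, hmy, hmax g (mem_filter.2 ⟨hg, rfl⟩)⟩
  exact hmax q (mem_filter.2 ⟨hq, hqy.trans hmy⟩)

theorem accepted_isIndepSet (hc : ∀ ⦃e q⦄, (bipartiteLineGraph xe ye).Adj e q → c e ≠ c q)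
    (S : Finset E) : (bipartiteLineGraph xe ye).IsIndepSet (accepted xe ye c S : Set E) := by
  rintro k hk k' hk' hne ⟨-, hx | hy⟩
  · have hkP := accepted_subset_proposals S hk
    have hk'P := accepted_subset_proposals S hk'
    exact hc ⟨hne, Or.inl hx⟩ <| le_antisymm
      ((mem_filter.1 hkP).2 k' (proposals_subset S hk'P) hx.symm)
      ((mem_filter.1 hk'P).2 k (proposals_subset S hkP) hx)
  · exact hc ⟨hne, Or.inr hy⟩ <| le_antisymm
      ((mem_filter.1 hk').2 k (accepted_subset_proposals S hk) hy)
      ((mem_filter.1 hk).2 k' (accepted_subset_proposals S hk') hy.symm)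

theorem accepted_subset_proposals_sdiff (S : Finset E) :
    accepted xe ye c S ⊆ proposals xe c (S \ (proposals xe c S \ accepted xe ye c S)) := by
  intro m hm
  have hmP := accepted_subset_proposals S hm
  refine mem_filter.2 ⟨mem_sdiff.2 ⟨proposals_subset S hmP, fun h => (mem_sdiff.1 h).2 hm⟩, ?_⟩
  exact fun q hq => (mem_filter.1 hmP).2 q (mem_sdiff.1 hq).1

/-- The second conjunct is the invariant that carries the induction: a deleted proposal is
absorbed at its `Y`-end by the kernel of the smaller instance. -/
theorem exists_isKernel_arc (hc : ∀ ⦃e q⦄, (bipartiteLineGraph xe ye).Adj e q → c e ≠ c q)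
    (S : Finset E) : ∃ K, IsKernel (bipartiteLineGraph xe ye) (Arc xe ye c) S K ∧
      ∀ g ∈ proposals xe c S, ∃ k ∈ K, ye k = ye g ∧ c g ≤ c k := by
  induction S using Finset.strongInduction with
  | H S ih =>
  by_cases hall : proposals xe c S ⊆ accepted xe ye c S
  · refine ⟨accepted xe ye c S, ⟨(accepted_subset_proposals S).trans (proposals_subset S),
      accepted_isIndepSet hc S, fun e he heK => ?_⟩, fun g hg => exists_mem_accepted_le hg⟩
    obtain ⟨u, hu, hux, hue⟩ := exists_mem_proposals_le (c := c) he
    have hne : u ≠ e := by rintro rfl; exact heK (hall hu)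
    exact ⟨u, hall hu, Or.inl ⟨hux, hue.lt_of_ne (hc ⟨hne, Or.inl hux⟩)⟩⟩
  set R := proposals xe c S \ accepted xe ye c S
  obtain ⟨K, ⟨hKS, hKind, hKabs⟩, hKle⟩ :=
    ih (S \ R) (sdiff_ssubset (sdiff_subset.trans (proposals_subset S)) (sdiff_nonempty.2 hall))
  have hdom : ∀ g ∈ proposals xe c S, ∃ k ∈ K, ye k = ye g ∧ c g ≤ c k ∧ (g ∈ R → c g < c k) := by
    intro g hg
    obtain ⟨m, hm, hmy, hgm⟩ := exists_mem_accepted_le hg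
    obtain ⟨k, hk, hky, hmk⟩ := hKle m (accepted_subset_proposals_sdiff S hm)
    refine ⟨k, hk, hky.trans hmy, hgm.trans hmk, fun hgR => ?_⟩
    have hne : g ≠ m := by rintro rfl; exact (mem_sdiff.1 hgR).2 hm
    exact (hgm.lt_of_ne (hc ⟨hne, Or.inr hmy.symm⟩)).trans_le hmk
  refine ⟨K, ⟨hKS.trans sdiff_subset, hKind, fun e he heK => ?_⟩, fun g hg => ?_⟩
  · by_cases heR : e ∈ R
    · obtain ⟨k, hk, hky, -, hlt⟩ := hdom e (mem_sdiff.1 heR).1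
      exact ⟨k, hk, Or.inr ⟨hky, hlt heR⟩⟩
    · exact hKabs e (mem_sdiff.2 ⟨he, heR⟩) heK
  · obtain ⟨k, hk, hky, hgk, -⟩ := hdom g hg
    exact ⟨k, hk, hky, hgk⟩

variable (xe ye)

theorem card_arc_lt [Fintype E] {m : ℕ} (C : (bipartiteLineGraph xe ye).Coloring (Fin m))
    (e : E) : #{q | Arc xe ye C e q} < m := by
  have hinj : Set.InjOn C {q | Arc xe ye C e q} := by
    rintro q (⟨hqx, hq⟩ | ⟨hqy, hq⟩) q' (⟨hq'x, hq'⟩ | ⟨hq'y, hq'⟩) h <;> by_contra hne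
    · exact C.valid ⟨hne, Or.inl (hqx.trans hq'x.symm)⟩ h
    · exact (h ▸ hq).asymm hq'
    · exact (h ▸ hq').asymm hq
    · exact C.valid ⟨hne, Or.inr (hqy.trans hq'y.symm)⟩ h
  have hmaps : Set.MapsTo C {q | Arc xe ye C e q} (univ.erase (C e) : Finset (Fin m)) := by
    rintro q (⟨-, hq⟩ | ⟨-, hq⟩)
    · exact mem_erase.2 ⟨hq.ne, mem_univ _⟩
    · exact mem_erase.2 ⟨hq.ne', mem_univ _⟩
  calc #{q | Arc xe ye C e q}
      ≤ #(univ.erase (C e)) := card_le_card_of_injOn C (by simpa using hmaps) (by simpa using hinj)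
    _ = m - 1 := by rw [card_erase_of_mem (mem_univ _), card_univ, Fintype.card_fin]
    _ < m := Nat.sub_lt (C e).pos one_pos

theorem choosable_bipartiteLineGraph [Fintype E] {m : ℕ}
    (C : (bipartiteLineGraph xe ye).Coloring (Fin m)) :
    Choosable (bipartiteLineGraph xe ye) fun _ => m :=
  choosable_of_forall_isKernel (fun S => (exists_isKernel_arc (fun _ _ h => C.valid h) S).imp
    fun _ h => h.1) (card_arc_lt xe ye C)

end Galvin

namespace Multigraph

variable {V E : Type*} (G : Multigraph V E)

theorem exists_ends_eq_of_bipartite {X : Set V}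
    (hX : ∀ (e : E) (u w : V), G.ends e = s(u, w) → (u ∈ X ↔ w ∉ X)) :
    ∃ xe ye : E → V, ∀ e, G.ends e = s(xe e, ye e) ∧ xe e ∈ X ∧ ye e ∉ X := by
  have h : ∀ e, ∃ u w, G.ends e = s(u, w) ∧ u ∈ X ∧ w ∉ X := by
    intro e
    obtain ⟨⟨u, w⟩, huw⟩ := Quot.exists_rep (G.ends e)
    have hiff := hX e u w huw.symm
    by_cases hu : u ∈ X
    · exact ⟨u, w, huw.symm, hu, hiff.1 hu⟩
    · exact ⟨w, u, huw.symm.trans Sym2.eq_swap, not_not.1 (mt hiff.2 hu), hu⟩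
  choose xe ye hxy using h
  exact ⟨xe, ye, hxy⟩

theorem lineGraph_eq_bipartiteLineGraph {xe ye : E → V} (hends : ∀ e, G.ends e = s(xe e, ye e))
    (hdisj : ∀ e q, xe e ≠ ye q) : G.lineGraph = bipartiteLineGraph xe ye := by
  ext e q
  simp only [lineGraph, bipartiteLineGraph, hends, Sym2.mem_iff]
  constructor
  · rintro ⟨hne, x, hxe | hxe, hxq | hxq⟩ <;> subst hxe
    · exact ⟨hne, Or.inl hxq⟩
    · exact (hdisj e q hxq).elim
    · exact (hdisj q e hxq.symm).elim
    · exact ⟨hne, Or.inr hxq⟩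
  · rintro ⟨hne, h | h⟩
    · exact ⟨hne, xe e, Or.inl rfl, Or.inl h⟩
    · exact ⟨hne, ye e, Or.inr rfl, Or.inr h⟩

end Multigraph

theorem stmt_3_general {V E : Type*} [Fintype E] (G : Multigraph V E)
    (hbip : ∃ X : Set V, ∀ (e : E) (u w : V), G.ends e = s(u, w) → (u ∈ X ↔ w ∉ X)) :
    chromNum (Multigraph.lineGraph G) = listChromNum (Multigraph.lineGraph G) := by
  obtain ⟨X, hX⟩ := hbip
  obtain ⟨xe, ye, hends⟩ := G.exists_ends_eq_of_bipartite hX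
  rw [G.lineGraph_eq_bipartiteLineGraph (fun e => (hends e).1)
    fun e q h => (hends q).2.2 (h ▸ (hends e).2.1)]
  obtain ⟨C⟩ := colorable_chromNum (bipartiteLineGraph xe ye)
  exact chromNum_eq_listChromNum_of_choosable _ (Galvin.choosable_bipartiteLineGraph xe ye C)

/-- **Galvin's theorem.** For an arbitrary bipartite multigraph `G`,
the chromatic index equals the list chromatic index. -/
theorem stmt_3 {V E : Type*} [Fintype V] [Fintype E] (G : Multigraph V E)
    (hbip : ∃ X : Set V, ∀ (e : E) (u w : V), G.ends e = s(u, w) → (u ∈ X ↔ w ∉ X)) :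
    chromNum (Multigraph.lineGraph G) = listChromNum (Multigraph.lineGraph G) :=
  stmt_3_general G hbip
end

section
/- For any multigraph G on four vertices, the chromatic index of G equals the list chromatic index of G, i.e. χ'(G) = χ'_l(G). -/
/-!
Label the vertices `0, 1, 2, 3` and sort the edges of `G` by which of the three perfect matchings
`{01, 23}, {02, 13}, {03, 12}` of `K₄` they are parallel to, and within a matching by which of its
two edges they are parallel to. Two edges of `G` are then non-adjacent in `L(G)` exactly when they
are parallel to the two different edges of one matching, so the complement of `L(G)` is a disjoint
union of three complete bipartite graphs. For such a graph the clique number `k` is the sum over the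
three parts of the larger side, and it is `k`-choosable: if two non-adjacent vertices share a color,
give both that color and recurse (the clique number drops by one, each list by at most one);
otherwise non-adjacent vertices have disjoint lists, and Hall's theorem gives distinct colors,
because a set of vertices meeting both sides of a part has at least `2k` colors available.
-/

open scoped Classical

open Finset

def IsListColoringOn {α : Type*} (H : SimpleGraph α) (S : Finset α) (A : α → Finset ℕ)
    (c : α → ℕ) : Prop :=
  (∀ x ∈ S, c x ∈ A x) ∧ ∀ x ∈ S, ∀ y ∈ S, H.Adj x y → c x ≠ c y

/-- The complement of the disjoint union, over `i : ι`, of the complete bipartite graphs between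
`{x | t x = i ∧ σ x}` and `{x | t x = i ∧ ¬ σ x}`. -/
def coBicliqueGraph {α ι : Type*} (t : α → ι) (σ : α → Bool) : SimpleGraph α where
  Adj x y := x ≠ y ∧ (t x = t y → σ x = σ y)
  symm := ⟨fun _ _ ⟨hne, h⟩ => ⟨hne.symm, fun ht => (h ht.symm).symm⟩⟩
  loopless := ⟨fun _ h => h.1 rfl⟩

namespace coBicliqueGraph

variable {α ι : Type*} (t : α → ι) (σ : α → Bool)

noncomputable def cell (S : Finset α) (i : ι) (b : Bool) : Finset α :=
  {x ∈ S | t x = i ∧ σ x = b}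

/-- The clique number of the subgraph induced on `S`. -/
noncomputable def weight [Fintype ι] (S : Finset α) : ℕ :=
  ∑ i, max #(cell t σ S i true) #(cell t σ S i false)

variable {t σ}

lemma cell_mono {S T : Finset α} (h : S ⊆ T) (i : ι) (b : Bool) :
    cell t σ S i b ⊆ cell t σ T i b :=
  filter_subset_filter _ h

lemma card_cell_add_card_cell (S : Finset α) (i : ι) :
    #(cell t σ S i true) + #(cell t σ S i false) = #{x ∈ S | t x = i} := by
  unfold cell
  rw [← card_union_of_disjoint (disjoint_filter.2 fun x _ h₁ h₂ => by simp_all)]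
  congr 1
  ext x
  cases hx : σ x <;> simp [hx]

variable [Fintype ι]

lemma card_eq_sum_card_cell (t : α → ι) (σ : α → Bool) (S : Finset α) :
    #S = ∑ i, (#(cell t σ S i true) + #(cell t σ S i false)) := by
  simp only [card_cell_add_card_cell]
  exact card_eq_sum_card_fiberwise fun _ _ => mem_univ _

lemma weight_mono {S T : Finset α} (h : S ⊆ T) : weight t σ S ≤ weight t σ T :=
  sum_le_sum fun i _ =>
    max_le_max (card_le_card (cell_mono h i true)) (card_le_card (cell_mono h i false))

lemma card_le_two_mul_weight (S : Finset α) : #S ≤ 2 * weight t σ S := by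
  rw [card_eq_sum_card_cell t σ, weight, mul_sum]
  exact sum_le_sum fun i _ => by omega

lemma card_le_weight_of_forall {S : Finset α}
    (hS : ∀ x ∈ S, ∀ y ∈ S, t x = t y → σ x = σ y) : #S ≤ weight t σ S := by
  rw [card_eq_sum_card_cell t σ]
  refine sum_le_sum fun i _ => ?_
  obtain h | h : cell t σ S i true = ∅ ∨ cell t σ S i false = ∅ := by
    by_contra! h
    obtain ⟨⟨x, hx⟩, ⟨y, hy⟩⟩ := h
    simp only [cell, mem_filter] at hx hy
    simpa [hx.2.2, hy.2.2] using hS x hx.1 y hy.1 (hx.2.1.trans hy.2.1.symm)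
  all_goals simp [h]

lemma weight_sdiff_pair_lt {S : Finset α} {u v : α} (hu : u ∈ S) (hv : v ∈ S)
    (ht : t u = t v) (hσ : σ u ≠ σ v) : weight t σ (S \ {u, v}) < weight t σ S := by
  have hcell : ∀ b, #(cell t σ (S \ {u, v}) (t u) b) < #(cell t σ S (t u) b) := by
    intro b
    refine card_lt_card ⟨cell_mono sdiff_subset _ _, fun hsub => ?_⟩
    obtain ⟨x, hx, hxS, htx, rfl⟩ : ∃ x ∈ ({u, v} : Finset α), x ∈ S ∧ t x = t u ∧ σ x = b := by
      cases b <;> cases hσu : σ u <;> cases hσv : σ v <;> simp_all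
    have := hsub (mem_filter.2 ⟨hxS, htx, rfl⟩)
    simp [cell, hx] at this
  exact sum_lt_sum (fun i _ => max_le_max (card_le_card (cell_mono sdiff_subset i true))
    (card_le_card (cell_mono sdiff_subset i false)))
    ⟨t u, mem_univ _, max_lt_max (hcell _) (hcell _)⟩

lemma exists_isClique_card_eq_weight (S : Finset α) :
    ∃ K ⊆ S, (coBicliqueGraph t σ).IsClique (K : Set α) ∧ #K = weight t σ S := by
  set b : ι → Bool := fun i => decide (#(cell t σ S i false) ≤ #(cell t σ S i true))
  have hb : ∀ i, #(cell t σ S i (b i)) = max #(cell t σ S i true) #(cell t σ S i false) := by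
    intro i
    by_cases h : #(cell t σ S i false) ≤ #(cell t σ S i true)
    · simp [b, h]
    · simp [b, h, (not_le.1 h).le]
  refine ⟨{x ∈ S | σ x = b (t x)}, filter_subset _ _, fun x hx y hy hne => ⟨hne, fun ht => ?_⟩, ?_⟩
  · simp only [mem_coe, mem_filter] at hx hy
    rw [hx.2, hy.2, ht]
  · rw [weight, card_eq_sum_card_fiberwise (f := t) fun _ _ => mem_univ _]
    refine sum_congr rfl fun i _ => ?_
    rw [← hb, cell, filter_filter]
    congr 1
    ext x
    simp only [mem_filter]
    constructor
    · rintro ⟨hx, hσ, rfl⟩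
      exact ⟨hx, rfl, hσ⟩
    · rintro ⟨hx, rfl, hσ⟩
      exact ⟨hx, hσ, rfl⟩

lemma weight_univ_le_of_colorable [Fintype α] {n : ℕ} (hc : (coBicliqueGraph t σ).Colorable n) :
    weight t σ univ ≤ n := by
  obtain ⟨K, -, hK, hcard⟩ := exists_isClique_card_eq_weight (t := t) (σ := σ) univ
  exact hcard ▸ hK.card_le_of_colorable hc

lemma card_le_card_biUnion_of_disjoint {S : Finset α} {A : α → Finset ℕ}
    (hA : ∀ x ∈ S, weight t σ S ≤ #(A x))
    (hdisj : ∀ x ∈ S, ∀ y ∈ S, t x = t y → σ x ≠ σ y → Disjoint (A x) (A y))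
    {s : Finset α} (hs : s ⊆ S) : #s ≤ #(s.biUnion A) := by
  by_cases hone : ∀ x ∈ s, ∀ y ∈ s, t x = t y → σ x = σ y
  · obtain rfl | ⟨x, hx⟩ := s.eq_empty_or_nonempty
    · simp
    calc #s ≤ weight t σ s := card_le_weight_of_forall hone
      _ ≤ weight t σ S := weight_mono hs
      _ ≤ #(A x) := hA x (hs hx)
      _ ≤ #(s.biUnion A) := card_le_card (subset_biUnion_of_mem A hx)
  · push Not at hone
    obtain ⟨x, hx, y, hy, ht, hσ⟩ := hone
    calc #s ≤ #S := card_le_card hs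
      _ ≤ 2 * weight t σ S := card_le_two_mul_weight S
      _ ≤ #(A x) + #(A y) := by linarith [hA x (hs hx), hA y (hs hy)]
      _ = #(A x ∪ A y) := (card_union_of_disjoint (hdisj x (hs hx) y (hs hy) ht hσ)).symm
      _ ≤ #(s.biUnion A) :=
        card_le_card (union_subset (subset_biUnion_of_mem A hx) (subset_biUnion_of_mem A hy))

lemma exists_injOn_of_disjoint {S : Finset α} {A : α → Finset ℕ}
    (hA : ∀ x ∈ S, weight t σ S ≤ #(A x))
    (hdisj : ∀ x ∈ S, ∀ y ∈ S, t x = t y → σ x ≠ σ y → Disjoint (A x) (A y)) :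
    ∃ c : α → ℕ, (∀ x ∈ S, c x ∈ A x) ∧ Set.InjOn c S := by
  obtain ⟨f, hf, hfA⟩ := (all_card_le_biUnion_card_iff_exists_injective fun x : S => A x).1
    fun s => by
      have := card_le_card_biUnion_of_disjoint hA hdisj (s := s.image Subtype.val)
        fun x hx => by obtain ⟨y, -, rfl⟩ := mem_image.1 hx; exact y.2
      rwa [image_biUnion, card_image_of_injective _ Subtype.val_injective] at this
  refine ⟨fun x => if h : x ∈ S then f ⟨x, h⟩ else 0,
    fun x hx => by simpa [hx] using hfA ⟨x, hx⟩, fun x hx y hy h => ?_⟩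
  simp only [mem_coe] at hx hy
  simp only [dif_pos hx, dif_pos hy] at h
  exact congrArg Subtype.val (hf h)

omit [Fintype ι] in
lemma isListColoringOn_ite_of_sdiff_pair {S : Finset α} {A : α → Finset ℕ} {u v : α} {a : ℕ}
    {c : α → ℕ} (hu : u ∈ S) (hv : v ∈ S) (ht : t u = t v) (hσ : σ u ≠ σ v) (hau : a ∈ A u)
    (hav : a ∈ A v)
    (hc : IsListColoringOn (coBicliqueGraph t σ) (S \ {u, v}) (fun x => (A x).erase a) c) :
    IsListColoringOn (coBicliqueGraph t σ) S A
      (fun x => if x ∈ ({u, v} : Finset α) then a else c x) := by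
  have hcA : ∀ z ∈ S, z ∉ ({u, v} : Finset α) → c z ∈ (A z).erase a := fun z hz hz' =>
    hc.1 z (mem_sdiff.2 ⟨hz, hz'⟩)
  refine ⟨fun x hx => ?_, fun x hx y hy hxy => ?_⟩
  · by_cases hxuv : x ∈ ({u, v} : Finset α)
    · rcases mem_insert.1 hxuv with rfl | hxv
      · simpa using hau
      · simpa [mem_singleton.1 hxv] using hav
    · simpa [hxuv] using mem_of_mem_erase (hcA x hx hxuv)
  by_cases hx' : x ∈ ({u, v} : Finset α) <;> by_cases hy' : y ∈ ({u, v} : Finset α)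
  · exfalso
    simp only [mem_insert, mem_singleton] at hx' hy'
    rcases hx' with rfl | rfl <;> rcases hy' with rfl | rfl
    exacts [hxy.1 rfl, hσ (hxy.2 ht), hσ (hxy.2 ht.symm).symm, hxy.1 rfl]
  · simpa [hx', hy'] using (ne_of_mem_erase (hcA y hy hy')).symm
  · simpa [hx', hy'] using ne_of_mem_erase (hcA x hx hx')
  · simpa [hx', hy'] using hc.2 x (mem_sdiff.2 ⟨hx, hx'⟩) y (mem_sdiff.2 ⟨hy, hy'⟩) hxy

lemma exists_isListColoringOn_of_weight_le_card (S : Finset α) (A : α → Finset ℕ)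
    (hA : ∀ x ∈ S, weight t σ S ≤ #(A x)) :
    ∃ c, IsListColoringOn (coBicliqueGraph t σ) S A c := by
  induction S using Finset.strongInduction generalizing A with
  | H S ih =>
  by_cases hpair : ∃ u ∈ S, ∃ v ∈ S, t u = t v ∧ σ u ≠ σ v ∧ ¬Disjoint (A u) (A v)
  · obtain ⟨u, hu, v, hv, ht, hσ, hAuv⟩ := hpair
    obtain ⟨a, hau, hav⟩ := not_disjoint_iff.1 hAuv
    have huv : {u, v} ⊆ S := insert_subset hu (singleton_subset_iff.2 hv)
    obtain ⟨c, hc⟩ := ih (S \ {u, v}) (sdiff_ssubset huv (insert_nonempty _ _))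
      (fun x => (A x).erase a) fun x hx => by
        have := weight_sdiff_pair_lt hu hv ht hσ
        have := hA x (sdiff_subset hx)
        have := pred_card_le_card_erase (s := A x) (a := a)
        omega
    exact ⟨_, isListColoringOn_ite_of_sdiff_pair hu hv ht hσ hau hav hc⟩
  · push Not at hpair
    obtain ⟨c, hcA, hc⟩ := exists_injOn_of_disjoint hA hpair
    exact ⟨c, hcA, fun x hx y hy hxy h => hxy.1 (hc hx hy h)⟩

theorem choosable [Fintype α] : Choosable (coBicliqueGraph t σ) fun _ => weight t σ univ := by
  intro A hA
  obtain ⟨c, hcA, hc⟩ := exists_isListColoringOn_of_weight_le_card univ A fun x _ => (hA x).ge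
  exact ⟨c, fun x => hcA x (mem_univ x), fun x y => hc x (mem_univ x) y (mem_univ y)⟩

end coBicliqueGraph

theorem Choosable.colorable {α : Type*} {H : SimpleGraph α} {n : ℕ}
    (h : Choosable H fun _ => n) : H.Colorable n := by
  obtain ⟨c, hc, hadj⟩ := h (fun _ => range n) fun _ => card_range n
  exact ⟨⟨fun x => ⟨c x, mem_range.1 (hc x)⟩, fun hxy h => hadj hxy (congrArg Fin.val h)⟩⟩

theorem chromNum_eq_listChromNum_of_choosable_s5 {α : Type*} {H : SimpleGraph α} {k : ℕ}
    (hk : Choosable H fun _ => k) (hle : ∀ n, H.Colorable n → k ≤ n) :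
    chromNum H = listChromNum H := by
  have hl : Choosable H fun _ => listChromNum H :=
    Nat.sInf_mem (s := {n | Choosable H fun _ => n}) ⟨k, hk⟩
  have h₁ : chromNum H ≤ listChromNum H := Nat.sInf_le hl.colorable
  have h₂ : listChromNum H ≤ k := Nat.sInf_le hk
  have h₃ : k ≤ chromNum H := hle _ (Nat.sInf_mem (s := {n | H.Colorable n}) ⟨k, hk.colorable⟩)
  omega

theorem chromNum_coBicliqueGraph_eq_listChromNum {α ι : Type*} [Fintype α] [Fintype ι]
    (t : α → ι) (σ : α → Bool) :
    chromNum (coBicliqueGraph t σ) = listChromNum (coBicliqueGraph t σ) :=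
  chromNum_eq_listChromNum_of_choosable_s5 coBicliqueGraph.choosable fun _ =>
    coBicliqueGraph.weight_univ_le_of_colorable

/-- The index of the perfect matching `{01, 23}`, `{02, 13}` or `{03, 12}` of `K₄` containing
the edge `s`. -/
def matchingIndex (s : Sym2 (Fin 4)) : Fin 3 :=
  if 0 ∈ s then (if 1 ∈ s then 0 else if 2 ∈ s then 1 else 2)
  else (if 1 ∈ s then (if 2 ∈ s then 2 else 1) else 0)

lemma exists_mem_and_mem_iff_matchingIndex :
    ∀ s s' : Sym2 (Fin 4), ¬s.IsDiag → ¬s'.IsDiag →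
      ((∃ x, x ∈ s ∧ x ∈ s') ↔ (matchingIndex s = matchingIndex s' → (0 ∈ s ↔ 0 ∈ s'))) := by
  decide

theorem Multigraph.lineGraph_eq_coBicliqueGraph {V E : Type*} (G : Multigraph V E)
    (e : V ≃ Fin 4) :
    G.lineGraph = coBicliqueGraph (fun x => matchingIndex ((G.ends x).map e))
      (fun x => decide (0 ∈ (G.ends x).map e)) := by
  have hdiag : ∀ x, ¬((G.ends x).map e).IsDiag := fun x =>
    (Sym2.isDiag_map e.injective).not.2 (G.not_isDiag x)
  ext x y
  simp only [lineGraph, coBicliqueGraph, decide_eq_decide]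
  rw [← exists_mem_and_mem_iff_matchingIndex _ _ (hdiag x) (hdiag y)]
  simp [Sym2.mem_map, e.injective.eq_iff]

/-- **LCC for multigraphs on four vertices.** For an arbitrary multigraph `G` on four
vertices, the chromatic index equals the list chromatic index. -/
theorem stmt_5 {V E : Type*} [Fintype V] [Fintype E] (G : Multigraph V E)
    (hcard : Fintype.card V = 4) :
    chromNum (Multigraph.lineGraph G) = listChromNum (Multigraph.lineGraph G) := by
  rw [G.lineGraph_eq_coBicliqueGraph (Fintype.equivFinOfCardEq hcard)]
  exact chromNum_coBicliqueGraph_eq_listChromNum _ _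
end

section
/- For any line perfect multigraph G = (V,E), the chromatic index satisfies χ'(G) = max( max over v ∈ V of d_G(v), max over distinct triples a,b,c ∈ V of |E(a,b,c)| ), where E(a,b,c) denotes the set of all edges of G with both endpoints in {a,b,c}. -/
/-!
A clique of the line graph is a family of pairwise intersecting edges, and such a family
either has a common vertex or lies inside a triangle `{a, b, c}`; conversely the edges at a
vertex, and the edges spanned by three vertices, form cliques. So the clique number of `L(G)`
is the larger of the maximum degree and the maximum of `|E(a, b, c)|`, and perfection of
`L(G)` makes it the chromatic number.
-/

open scoped Classical

namespace Sym2

variable {V : Type*}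

theorem mem_of_exists_mem_mk {p q : V} {z : Sym2 V} (h : ∃ x ∈ s(p, q), x ∈ z) (hp : p ∉ z) :
    q ∈ z := by
  obtain ⟨x, hx, hxz⟩ := h
  rcases mem_iff.mp hx with rfl | rfl
  · exact absurd hxz hp
  · exact hxz

theorem exists_mem_mem_of_forall_mem_triple {a b c : V} {z w : Sym2 V} (hz : ¬ z.IsDiag)
    (hw : ¬ w.IsDiag) (hza : ∀ x ∈ z, x = a ∨ x = b ∨ x = c)
    (hwa : ∀ x ∈ w, x = a ∨ x = b ∨ x = c) : ∃ x ∈ z, x ∈ w := by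
  induction z using Sym2.ind with | _ p q => ?_
  induction w using Sym2.ind with | _ r t => ?_
  simp only [mk_isDiag_iff, mem_iff, forall_eq_or_imp, forall_eq, exists_eq_or_imp,
    exists_eq_left] at *
  by_cases hr : r = p ∨ r = q
  · grind
  by_cases ht : t = p ∨ t = q
  · grind
  grind

theorem exists_forall_mem_or_exists_forall_mem_triple {ι : Type*} {f : ι → Sym2 V} {s : Set ι}
    (hs : s.Nonempty) (hmeet : ∀ i ∈ s, ∀ j ∈ s, ∃ x ∈ f i, x ∈ f j) :
    (∃ v, ∀ i ∈ s, v ∈ f i) ∨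
      ∃ a b c, a ≠ b ∧ a ≠ c ∧ b ≠ c ∧ ∀ i ∈ s, ∀ x ∈ f i, x = a ∨ x = b ∨ x = c := by
  obtain ⟨i₁, hi₁⟩ := hs
  induction h₁ : f i₁ using Sym2.ind with | _ a b => ?_
  by_cases hA : ∀ i ∈ s, a ∈ f i
  · exact .inl ⟨a, hA⟩
  obtain ⟨i₂, hi₂, ha₂⟩ := not_forall₂.mp hA
  have hb₂ : b ∈ f i₂ := mem_of_exists_mem_mk (h₁ ▸ hmeet i₁ hi₁ i₂ hi₂) ha₂
  set c := Mem.other hb₂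
  have h₂ : f i₂ = s(b, c) := (other_spec hb₂).symm
  by_cases hB : ∀ i ∈ s, b ∈ f i
  · exact .inl ⟨b, hB⟩
  obtain ⟨i₃, hi₃, hb₃⟩ := not_forall₂.mp hB
  have ha₃ : a ∈ f i₃ :=
    mem_of_exists_mem_mk (by rw [← eq_swap, ← h₁]; exact hmeet i₁ hi₁ i₃ hi₃) hb₃
  have hc₃ : c ∈ f i₃ := mem_of_exists_mem_mk (h₂ ▸ hmeet i₂ hi₂ i₃ hi₃) hb₃
  have hab : a ≠ b := fun h => ha₂ (h ▸ hb₂)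
  have hac : a ≠ c := fun h => ha₂ (h ▸ other_mem hb₂)
  have hbc : b ≠ c := fun h => hb₃ (h ▸ hc₃)
  have h₃ : f i₃ = s(a, c) := (mem_and_mem_iff hac).mp ⟨ha₃, hc₃⟩
  refine .inr ⟨a, b, c, hab, hac, hbc, fun i hi x hx => ?_⟩
  by_contra! hx'
  obtain ⟨hxa, hxb, hxc⟩ := hx'
  -- the other end of `f i` would have to lie on all three sides of the triangle `a b c`
  have hxy : f i = s(x, Mem.other hx) := (other_spec hx).symm
  have hy₁ := mem_of_exists_mem_mk (hxy ▸ hmeet i hi i₁ hi₁) (by simp [h₁, hxa, hxb])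
  have hy₂ := mem_of_exists_mem_mk (hxy ▸ hmeet i hi i₂ hi₂) (by simp [h₂, hxb, hxc])
  have hy₃ := mem_of_exists_mem_mk (hxy ▸ hmeet i hi i₃ hi₃) (by simp [h₃, hxa, hxc])
  simp only [h₁, h₂, h₃, mem_iff] at hy₁ hy₂ hy₃
  grind

end Sym2

namespace SimpleGraph

variable {α β : Type*} {H : SimpleGraph α}

theorem IsClique.ncard_le_cliqueNum [Finite α] {s : Set α} (hs : H.IsClique s) :
    s.ncard ≤ H.cliqueNum := by
  have := Fintype.ofFinite α
  rw [Set.ncard_eq_toFinset_card']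
  exact IsClique.card_le_cliqueNum (tc := by simpa using hs)

theorem colorable_chromNum [Finite α] (H : SimpleGraph α) : H.Colorable (chromNum H) := by
  have := Fintype.ofFinite α
  exact Nat.sInf_mem (s := {n | H.Colorable n}) ⟨_, H.colorable_of_fintype⟩

theorem chromNum_le_of_hom [Finite β] {H' : SimpleGraph β} (f : H →g H') :
    chromNum H ≤ chromNum H' :=
  Nat.sInf_le (H'.colorable_chromNum.of_hom f)

theorem cliqueNum_le_chromNum [Finite α] (H : SimpleGraph α) : H.cliqueNum ≤ chromNum H := by
  obtain ⟨s, hs⟩ := H.exists_isNClique_cliqueNum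
  exact hs.card_eq ▸ hs.isClique.card_le_of_colorable H.colorable_chromNum

end SimpleGraph

theorem IsPerfect.chromNum_eq_cliqueNum {α : Type*} [Finite α] {H : SimpleGraph α}
    (hH : IsPerfect H) : chromNum H = H.cliqueNum :=
  le_antisymm
    (calc chromNum H ≤ chromNum (H.induce Set.univ) :=
          SimpleGraph.chromNum_le_of_hom H.induceUnivIso.symm.toHom
      _ = (H.induce Set.univ).cliqueNum := hH Set.univ
      _ ≤ H.cliqueNum := H.cliqueNum_induce_le Set.univ)
    H.cliqueNum_le_chromNum

namespace Multigraph

variable {V E : Type*} (G : Multigraph V E)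

def incidenceSet (x : V) : Set E := {e | x ∈ G.ends e}

/-- The set `E(a, b, c)`. -/
def edgesOn (a b c : V) : Set E := {e | ∀ x ∈ G.ends e, x = a ∨ x = b ∨ x = c}

theorem isClique_incidenceSet (x : V) : G.lineGraph.IsClique (G.incidenceSet x) :=
  fun _ he _ hf hne => ⟨hne, x, he, hf⟩

theorem isClique_edgesOn (a b c : V) : G.lineGraph.IsClique (G.edgesOn a b c) :=
  fun e he f hf hne => ⟨hne, by
    simpa using Sym2.exists_mem_mem_of_forall_mem_triple (G.not_isDiag e) (G.not_isDiag f) he hf⟩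

theorem exists_subset_incidenceSet_or_edgesOn {s : Set E} (hs : G.lineGraph.IsClique s)
    (hne : s.Nonempty) :
    (∃ x, s ⊆ G.incidenceSet x) ∨
      ∃ a b c, a ≠ b ∧ a ≠ c ∧ b ≠ c ∧ s ⊆ G.edgesOn a b c := by
  refine Sym2.exists_forall_mem_or_exists_forall_mem_triple hne fun e he f hf => ?_
  rcases eq_or_ne e f with rfl | hef
  · exact ⟨_, (G.ends e).out_fst_mem, (G.ends e).out_fst_mem⟩
  · simpa using (hs he hf hef).2

variable [Finite E]

theorem degree_le_cliqueNum (x : V) : G.degree x ≤ G.lineGraph.cliqueNum :=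
  (G.isClique_incidenceSet x).ncard_le_cliqueNum

theorem ncard_edgesOn_le_cliqueNum (a b c : V) :
    (G.edgesOn a b c).ncard ≤ G.lineGraph.cliqueNum :=
  (G.isClique_edgesOn a b c).ncard_le_cliqueNum

theorem cliqueNum_lineGraph_le [Finite V] :
    G.lineGraph.cliqueNum ≤ max (⨆ x, G.degree x)
      (sSup {m | ∃ a b c, a ≠ b ∧ a ≠ c ∧ b ≠ c ∧ m = (G.edgesOn a b c).ncard}) := by
  set T := {m | ∃ a b c, a ≠ b ∧ a ≠ c ∧ b ≠ c ∧ m = (G.edgesOn a b c).ncard}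
  have hT : BddAbove T :=
    ⟨Nat.card E, by rintro _ ⟨a, b, c, -, -, -, rfl⟩; exact Set.ncard_le_card _⟩
  obtain ⟨s, hs⟩ := G.lineGraph.exists_isNClique_cliqueNum
  rcases s.eq_empty_or_nonempty with rfl | hne
  · simp [← hs.card_eq]
  rw [← hs.card_eq, ← Set.ncard_coe_finset]
  rcases G.exists_subset_incidenceSet_or_edgesOn hs.isClique (by simpa using hne) with
    ⟨x, hx⟩ | ⟨a, b, c, hab, hac, hbc, habc⟩
  · calc (s : Set E).ncard ≤ G.degree x := Set.ncard_le_ncard hx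
      _ ≤ ⨆ x, G.degree x := le_ciSup (Set.finite_range _).bddAbove x
      _ ≤ _ := le_max_left _ _
  · calc (s : Set E).ncard ≤ (G.edgesOn a b c).ncard := Set.ncard_le_ncard habc
      _ ≤ sSup T := le_csSup hT ⟨a, b, c, hab, hac, hbc, rfl⟩
      _ ≤ _ := le_max_right _ _

theorem cliqueNum_lineGraph [Finite V] :
    G.lineGraph.cliqueNum = max (⨆ x, G.degree x)
      (sSup {m | ∃ a b c, a ≠ b ∧ a ≠ c ∧ b ≠ c ∧ m = (G.edgesOn a b c).ncard}) :=
  le_antisymm G.cliqueNum_lineGraph_le <| max_le (ciSup_le' G.degree_le_cliqueNum) <|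
    csSup_le' <| by rintro _ ⟨a, b, c, -, -, -, rfl⟩; exact G.ncard_edgesOn_le_cliqueNum a b c

end Multigraph

/-- For a line perfect multigraph, the chromatic index is the maximum of the maximum
degree and the maximum number of edges spanned by three distinct vertices. -/
theorem stmt_10 {V E : Type*} [Fintype V] [Fintype E] (G : Multigraph V E)
    (hperf : IsPerfect (Multigraph.lineGraph G)) :
    chromNum (Multigraph.lineGraph G) =
      max (⨆ x : V, G.degree x)
        (sSup {m : ℕ | ∃ a b c : V, a ≠ b ∧ a ≠ c ∧ b ≠ c ∧
          m = {e : E | ∀ x ∈ G.ends e, x = a ∨ x = b ∨ x = c}.ncard}) :=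
  hperf.chromNum_eq_cliqueNum.trans G.cliqueNum_lineGraph
end

section
/- Let G = (V,E) be a multigraph on vertices v_1,…,v_n,a,b such that {v_1,…,v_n} is an independent set, and suppose t_G(v_1) ≥ t_G(v_2) ≥ … ≥ t_G(v_n). Then no v_i with i > 1 is great in G. -/
open scoped Classical

namespace Multigraph

variable {V E : Type*}

/-- `t_G(x)`: the number of edges of the triangle on the vertices `a`, `b`, `x`,
i.e. of edges with both endpoints in `{a, b, x}`. -/
noncomputable def triCount (G : Multigraph V E) (a b x : V) : ℕ :=
  {e : E | ∀ y ∈ G.ends e, y = a ∨ y = b ∨ y = x}.ncard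

/-- `x` is big (relative to `a`, `b`) if `t_G(x) ≥ max (d_G(a), d_G(b))`. -/
def Big (G : Multigraph V E) (a b x : V) : Prop :=
  max (G.degree a) (G.degree b) ≤ G.triCount a b x

/-- `x` is great (relative to `a`, `b`) if `t_G(x) > max (d_G(a), d_G(b))`. -/
def Great (G : Multigraph V E) (a b x : V) : Prop :=
  max (G.degree a) (G.degree b) < G.triCount a b x

/-- The multigraph obtained from `G` by deleting the edges `e` and `q`. -/
def delete (G : Multigraph V E) (e q : E) : Multigraph V {r : E // r ≠ e ∧ r ≠ q} where
  ends r := G.ends r.1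
  not_isDiag r := G.not_isDiag r.1

end Multigraph

/-! Counting the edges from `a` to `b, x, y` and from `b` to `a, x, y` shows
`t(x) + t(y) ≤ d(a) + d(b)` for distinct `x, y ∉ {a, b}`. Hence `t(x) ≤ t(y)` forces
`2 t(x) ≤ d(a) + d(b) ≤ 2 max (d(a), d(b))`, so `x` is not great; take `y = v₁`. -/

namespace Multigraph

variable {V E : Type*} (G : Multigraph V E)

/-- `G.edgeCount s(x, y) = |E(x, y)|`. -/
noncomputable def edgeCount (p : Sym2 V) : ℕ :=
  {e : E | G.ends e = p}.ncard

theorem ncard_setOf_ends_mem [Finite E] (T : Finset (Sym2 V)) :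
    {e : E | G.ends e ∈ T}.ncard = ∑ p ∈ T, G.edgeCount p := by
  cases nonempty_fintype E
  simp only [edgeCount, Set.ncard_eq_toFinset_card', Set.toFinset_ofPred]
  rw [Finset.card_eq_sum_card_fiberwise (f := G.ends) (t := T) fun e he => by simpa using he]
  refine Finset.sum_congr rfl fun p hp => congrArg Finset.card ?_
  ext e
  simp only [Finset.mem_filter, Finset.mem_univ, true_and, and_iff_right_iff_imp]
  rintro rfl
  exact hp

theorem ends_mem_triangle {a b x : V} {e : E} (h : ∀ y ∈ G.ends e, y = a ∨ y = b ∨ y = x) :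
    G.ends e ∈ ({s(a, b), s(a, x), s(b, x)} : Finset (Sym2 V)) := by
  induction h' : G.ends e using Sym2.ind with
  | h p q =>
    have hpq : p ≠ q := by simpa [h'] using G.not_isDiag e
    rw [h'] at h
    have hp := h p (Sym2.mem_mk_left p q)
    have hq := h q (Sym2.mem_mk_right p q)
    rcases hp with rfl | rfl | rfl <;> rcases hq with rfl | rfl | rfl <;>
      simp_all [Sym2.eq_swap]

theorem triCount_eq [Finite E] {a b x : V} (hab : a ≠ b) (hax : a ≠ x) (hbx : b ≠ x) :
    G.triCount a b x = G.edgeCount s(a, b) + G.edgeCount s(a, x) + G.edgeCount s(b, x) := by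
  have htri : {e : E | ∀ y ∈ G.ends e, y = a ∨ y = b ∨ y = x}
      = {e | G.ends e ∈ ({s(a, b), s(a, x), s(b, x)} : Finset (Sym2 V))} := by
    ext e
    refine ⟨G.ends_mem_triangle, fun he y hy => ?_⟩
    simp only [Finset.mem_insert, Finset.mem_singleton, Set.mem_ofPred_eq] at he
    rcases he with he | he | he <;> rw [he, Sym2.mem_iff] at hy <;> tauto
  rw [triCount, htri, ncard_setOf_ends_mem]
  simp [Finset.sum_insert, hab, hax, hbx, hab.symm, hbx.symm, add_assoc]

theorem edgeCount_add_le_degree [Finite E] {a x y z : V} (hxy : x ≠ y) (hxz : x ≠ z)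
    (hyz : y ≠ z) :
    G.edgeCount s(a, x) + G.edgeCount s(a, y) + G.edgeCount s(a, z) ≤ G.degree a := by
  have hsub : {e : E | G.ends e ∈ ({s(a, x), s(a, y), s(a, z)} : Finset (Sym2 V))}
      ⊆ {e | a ∈ G.ends e} := by
    intro e he
    simp only [Finset.mem_insert, Finset.mem_singleton, Set.mem_ofPred_eq] at he ⊢
    rcases he with he | he | he <;> simp [he]
  have hcount := Set.ncard_le_ncard hsub (Set.toFinite _)
  rwa [ncard_setOf_ends_mem, Finset.sum_insert, Finset.sum_insert, Finset.sum_singleton,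
    ← add_assoc] at hcount
  all_goals simp only [Finset.mem_insert, Finset.mem_singleton, Sym2.congr_right]; tauto

theorem triCount_add_triCount_le_degree_add_degree [Finite E] {a b x y : V} (hab : a ≠ b)
    (hxy : x ≠ y) (hax : a ≠ x) (hbx : b ≠ x) (hay : a ≠ y) (hby : b ≠ y) :
    G.triCount a b x + G.triCount a b y ≤ G.degree a + G.degree b := by
  have hdeg_a := G.edgeCount_add_le_degree (a := a) hbx hby hxy
  have hdeg_b := G.edgeCount_add_le_degree (a := b) hax hay hxy
  rw [Sym2.eq_swap] at hdeg_b
  rw [G.triCount_eq hab hax hbx, G.triCount_eq hab hay hby]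
  omega

theorem not_great_of_triCount_le [Finite E] {a b x y : V} (hab : a ≠ b) (hxy : x ≠ y)
    (hax : a ≠ x) (hbx : b ≠ x) (hay : a ≠ y) (hby : b ≠ y)
    (hle : G.triCount a b x ≤ G.triCount a b y) : ¬ G.Great a b x := by
  intro hgreat
  rw [Great, max_lt_iff] at hgreat
  have := G.triCount_add_triCount_le_degree_add_degree hab hxy hax hbx hay hby
  omega

end Multigraph

theorem stmt_13_general {V E : Type*} [Fintype E] (G : Multigraph V E)
    (n : ℕ) (v : Fin n → V) (a b : V)
    (hab : a ≠ b) (hva : ∀ i, v i ≠ a) (hvb : ∀ i, v i ≠ b)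
    (hinj : Function.Injective v)
    (hmono : ∀ i j : Fin n, i ≤ j → G.triCount a b (v j) ≤ G.triCount a b (v i)) :
    ∀ i : Fin n, 0 < (i : ℕ) → ¬ G.Great a b (v i) := by
  intro i hi
  let i₀ : Fin n := ⟨0, hi.trans i.isLt⟩
  have hne : i ≠ i₀ := Fin.ne_of_val_ne hi.ne'
  exact G.not_great_of_triCount_le hab (hinj.ne hne) (hva i).symm (hvb i).symm
    (hva i₀).symm (hvb i₀).symm (hmono i₀ i (Nat.zero_le i))

/-- In a multigraph on `v₁, …, vₙ, a, b` with `{v₁, …, vₙ}` independent and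
`t_G(v₁) ≥ t_G(v₂) ≥ … ≥ t_G(vₙ)`, no `vᵢ` with `i > 1` is great. -/
theorem stmt_13 {V E : Type*} [Fintype V] [Fintype E] (G : Multigraph V E)
    (n : ℕ) (v : Fin n → V) (a b : V)
    (hab : a ≠ b) (hva : ∀ i, v i ≠ a) (hvb : ∀ i, v i ≠ b)
    (hinj : Function.Injective v)
    (hcover : ∀ x : V, x = a ∨ x = b ∨ ∃ i, x = v i)
    (hind : ∀ (e : E) (i j : Fin n), G.ends e ≠ s(v i, v j))
    (hmono : ∀ i j : Fin n, i ≤ j → G.triCount a b (v j) ≤ G.triCount a b (v i)) :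
    ∀ i : Fin n, 0 < (i : ℕ) → ¬ G.Great a b (v i) :=
  stmt_13_general G n v a b hab hva hvb hinj hmono
end
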